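/- arXiv:1303.5936 — 5 statements merged into one kernel-verified Lean document; each statement's English description precedes it below -/
import Mathlib

section
/- For natural numbers n, m, p with m ≤ n, the alternating sum ∑_{k=0}^{m} (-1)^k · C(p, k) · C(n-k, m-k) equals C(n-p, m), where for negative upper argument the convention C(-a, r) = (-1)^r · C(a+r-1, r) is used (equivalently, the identity holds for the generalized binomial coefficient over the integers). -/
/-- The generalized binomial coefficient `C(k, r)` for an integer upper argument `k`
and natural lower argument `r`, defined by `C(k, r) = ∏_{i=0}^{r-1} (k - i) / r!`. -/
noncomputable def genChoose (k : ℤ) (r : ℕ) : ℚ :=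
  (∏ i ∈ Finset.range r, ((k : ℚ) - i)) / (r.factorial : ℚ)

/-!
`genChoose` is Mathlib's `Ring.choose` on `ℚ`, and the identity holds in every binomial ring with
`n` replaced by an arbitrary `x`. Writing `S p m x` for the left-hand side, Pascal's rule in `p`
gives `S (p + 1) (m + 1) x = S p (m + 1) x - S p m (x - 1)`, so by induction on `p` it remains to
check `C(x - p, m + 1) - C(x - 1 - p, m) = C(x - p - 1, m + 1)`, which is Pascal's rule in `x`.
-/

open Finset Polynomial

theorem genChoose_eq_ringChoose (k : ℤ) (r : ℕ) : genChoose k r = Ring.choose (k : ℚ) r := by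
  rw [Ring.choose_eq_smul, genChoose, ← aeval_eq_smeval, ← descPochhammer_eval_eq_prod_range,
    smul_eq_mul, div_eq_inv_mul]
  simp [aeval_def, eval₂_eq_eval_map, descPochhammer_map]

section BinomialRing

variable {R : Type*} [Ring R]

theorem sum_range_neg_one_pow_mul_succ_choose_mul (p m : ℕ) (f : ℕ → R) :
    ∑ k ∈ range (m + 2), (-1) ^ k * ((p + 1).choose k : R) * f k =
      ∑ k ∈ range (m + 2), (-1) ^ k * (p.choose k : R) * f k -
        ∑ k ∈ range (m + 1), (-1) ^ k * (p.choose k : R) * f (k + 1) := by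
  rw [sum_range_succ' _ (m + 1), sum_range_succ' _ (m + 1), sub_eq_add_neg, add_right_comm,
    ← sum_neg_distrib, ← sum_add_distrib]
  congr 1
  · refine sum_congr rfl fun k _ => ?_
    rw [Nat.choose_succ_succ', Nat.cast_add, pow_succ]
    noncomm_ring
  · simp

theorem Ring.sum_range_neg_one_pow_mul_choose_mul_choose_sub [BinomialRing R] (p m : ℕ) (x : R) :
    ∑ k ∈ range (m + 1), (-1) ^ k * (p.choose k : R) * Ring.choose (x - k) (m - k) =
      Ring.choose (x - p) m := by
  induction p generalizing m x with
  | zero =>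
    rw [sum_eq_single 0 (fun k _ hk => by simp [Nat.choose_eq_zero_of_lt (Nat.pos_of_ne_zero hk)])
      (by simp)]
    simp
  | succ p ih =>
    cases m with
    | zero => simp
    | succ m =>
      have shift (k : ℕ) : Ring.choose (x - (k + 1 : ℕ)) (m + 1 - (k + 1)) =
          Ring.choose (x - 1 - k) (m - k) := by
        rw [Nat.add_sub_add_right, Nat.cast_succ, sub_add_eq_sub_sub_swap]
      rw [sum_range_neg_one_pow_mul_succ_choose_mul]
      simp only [shift]
      have h1 : x - 1 - p = x - (p + 1 : ℕ) := by push_cast; abel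
      have h2 : x - p = x - (p + 1 : ℕ) + 1 := by push_cast; abel
      rw [ih, ih, h1, h2, Ring.choose_succ_succ, add_sub_cancel_left]

end BinomialRing

theorem alternating_binom_sum_general (n m p : ℕ) :
    ∑ k ∈ Finset.range (m + 1),
      (-1 : ℚ) ^ k * genChoose (p : ℤ) k * genChoose ((n : ℤ) - k) (m - k)
      = genChoose ((n : ℤ) - p) m := by
  simp only [genChoose_eq_ringChoose, Ring.choose_natCast, Int.cast_sub, Int.cast_natCast]
  exact Ring.sum_range_neg_one_pow_mul_choose_mul_choose_sub p m (n : ℚ)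

theorem alternating_binom_sum (n m p : ℕ) (h : m ≤ n) :
    ∑ k ∈ Finset.range (m + 1),
      (-1 : ℚ) ^ k * genChoose (p : ℤ) k * genChoose ((n : ℤ) - k) (m - k)
      = genChoose ((n : ℤ) - p) m :=
  alternating_binom_sum_general n m p
end

section
/- For integers n ≥ 1 and 0 ≤ i ≤ n/2, the Weyl dimension formula value for the U(n)-representation with highest weight (1,…,1 (i times), 0,…,0, −1,…,−1 (i times)) equals ((n−2i+1)/(n+1)) · C(n+1, i)², i.e. ∏_{1≤k<j≤n} (λ_k − λ_j + j − k)/(j − k) = ((n−2i+1)/(n+1)) · C(n+1, i)² where λ = (1^i, 0^{n−2i}, (−1)^i). -/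
/-!
Write `n = i + m + i`. A factor with `λ_k = λ_j` equals `1`, so row `j` only sees the earlier
blocks, and there the factors `(j - k + c) / (j - k)` telescope: a middle row `j = i + t` gives
`(i + t + 1) / (t + 1)`, a bottom row `j = i + m + t` gives
`(i + m + t + 1) (i + m + t + 2) / ((t + 1) (m + t + 2))`. The product of the rows is then
`C(i+m, m) C(2i+m, i) C(2i+m+1, i) / C(i+m+1, i)`, and two absorption identities
`(N + 1) C(N, k) = (N + 1 - k) C(N + 1, k)` turn it into `(m + 1) / (n + 1) · C(n+1, i)²`.
-/

open Finset

theorem prod_range_div'_of_ne_zero {K : Type*} [Field K] (f : ℕ → K) (n : ℕ)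
    (hf : ∀ k ≤ n, f k ≠ 0) : ∏ k ∈ range n, f k / f (k + 1) = f 0 / f n := by
  induction n with
  | zero => simp [hf 0 le_rfl]
  | succ n ih =>
    rw [prod_range_succ, ih fun k hk => hf k (by omega), div_mul_div_cancel₀ (hf n (by omega))]

section

variable {K : Type*} [Field K] [CharZero K]

theorem natCast_sub_natCast_ne_zero {a k : ℕ} (h : k < a) : (a : K) - k ≠ 0 :=
  sub_ne_zero.mpr (by exact_mod_cast h.ne')

theorem prod_range_add_sub_add_one_div (d i : ℕ) :
    ∏ k ∈ range i, ((d : K) + i - k + 1) / (d + i - k) = (d + i + 1) / (d + 1) := by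
  have h := prod_range_div'_of_ne_zero (fun k => (d : K) + i + 1 - k) i fun k hk => by
    exact_mod_cast natCast_sub_natCast_ne_zero (K := K) (a := d + i + 1) (by omega)
  rw [Nat.cast_zero, sub_zero, show (d : K) + i + 1 - i = d + 1 by ring] at h
  rw [← h]
  refine prod_congr rfl fun k _ => ?_
  push_cast
  ring_nf

theorem prod_range_add_sub_add_two_div (d i : ℕ) :
    ∏ k ∈ range i, ((d : K) + i - k + 2) / (d + i - k) =
      ((d + i + 1) * (d + i + 2)) / ((d + 1) * (d + 2)) := by
  have hne : ∀ k ≤ i, (d : K) + i + 1 - k ≠ 0 := fun k hk => by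
    exact_mod_cast natCast_sub_natCast_ne_zero (K := K) (a := d + i + 1) (by omega)
  have h := prod_range_div'_of_ne_zero
    (fun k => ((d : K) + i + 2 - k) * (d + i + 1 - k)) i fun k hk => mul_ne_zero
      (by exact_mod_cast natCast_sub_natCast_ne_zero (K := K) (a := d + i + 2) (by omega))
      (hne k hk)
  simp only [Nat.cast_zero, sub_zero] at h
  rw [show (d : K) + i + 1 - i = d + 1 by ring,
    show (d : K) + i + 2 - i = d + 2 by ring] at h
  rw [mul_comm ((d : K) + i + 1), mul_comm ((d : K) + 1), ← h]
  refine prod_congr rfl fun k hk => ?_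
  rw [Nat.cast_add_one, show (d : K) + i + 2 - (k + 1) = d + i + 1 - k by ring,
    show (d : K) + i + 1 - (k + 1) = d + i - k by ring, mul_comm _ ((d : K) + i - k),
    mul_div_mul_right _ _ (hne k (by simp at hk; omega))]
  ring_nf

theorem prod_range_add_succ_div_succ (a t : ℕ) :
    ∏ x ∈ range t, ((a : K) + x + 1) / (x + 1) = (a + t).choose t := by
  induction t with
  | zero => simp
  | succ t ih =>
    have h : ((a + t + 1 : ℕ) : K) * (a + t).choose t = (a + t + 1).choose (t + 1) * (t + 1) := by
      exact_mod_cast Nat.add_one_mul_choose_eq (a + t) t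
    rw [prod_range_succ, ih, ← add_assoc]
    push_cast at h ⊢
    field_simp
    linear_combination h

end

def weylRatio (w : ℕ → ℤ) (j k : ℕ) : ℚ := (((w k - w j : ℤ) : ℚ) + j - k) / ((j : ℚ) - k)

theorem weylRatio_of_sub_eq {w : ℕ → ℤ} {j k : ℕ} {c : ℤ} (h : w k - w j = c) :
    weylRatio w j k = ((j : ℚ) - k + c) / (j - k) := by
  rw [weylRatio, h]
  ring_nf

theorem weylRatio_eq_one_of_eq {w : ℕ → ℤ} {j k : ℕ} (hkj : k < j) (h : w k = w j) :
    weylRatio w j k = 1 := by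
  rw [weylRatio_of_sub_eq (sub_eq_zero.mpr h), Int.cast_zero, add_zero]
  exact div_self (natCast_sub_natCast_ne_zero hkj)

theorem prod_weylRatio_eq_one_of_const {w : ℕ → ℤ} {a t : ℕ}
    (h : ∀ s < t, w (a + s) = w (a + t)) :
    ∏ s ∈ range t, weylRatio w (a + t) (a + s) = 1 :=
  prod_eq_one fun s hs => weylRatio_eq_one_of_eq (by simp at hs; omega) (h s (by simpa using hs))

def hookWeight (i m k : ℕ) : ℤ := if k < i then 1 else if k < i + m then 0 else -1

section HookWeight

variable (i m : ℕ)

theorem prod_weylRatio_hookWeight_top (j : ℕ) (hj : j < i) :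
    ∏ k ∈ range j, weylRatio (hookWeight i m) j k = 1 := by
  simpa using prod_weylRatio_eq_one_of_const (w := hookWeight i m) (a := 0) (t := j)
    fun s hs => by simp [hookWeight, show s < i by omega, hj]

theorem prod_weylRatio_hookWeight_middle (t : ℕ) (ht : t < m) :
    ∏ k ∈ range (i + t), weylRatio (hookWeight i m) (i + t) k = (i + t + 1 : ℚ) / (t + 1) := by
  have hzero := prod_weylRatio_eq_one_of_const (w := hookWeight i m) (a := i) (t := t)
    fun s hs => by simp [hookWeight, show s < m by omega, ht]
  have hone : ∀ k ∈ range i, weylRatio (hookWeight i m) (i + t) k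
      = ((t : ℚ) + i - k + 1) / (t + i - k) := fun k hk => by
    rw [weylRatio_of_sub_eq (c := 1) (by simp [hookWeight, show k < i by simpa using hk, ht])]
    push_cast
    ring_nf
  rw [prod_range_add, hzero, mul_one, prod_congr rfl hone, prod_range_add_sub_add_one_div]
  ring_nf

theorem prod_weylRatio_hookWeight_bottom (t : ℕ) :
    ∏ k ∈ range (i + m + t), weylRatio (hookWeight i m) (i + m + t) k =
      ((i + m + t + 1) * (i + m + t + 2) : ℚ) / ((t + 1) * (m + t + 2)) := by
  have hzero := prod_weylRatio_eq_one_of_const (w := hookWeight i m) (a := i + m) (t := t)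
    fun s hs => by simp [hookWeight]; omega
  have htwo : ∀ k ∈ range i, weylRatio (hookWeight i m) (i + m + t) k
      = (((m + t : ℕ) : ℚ) + i - k + 2) / ((m + t : ℕ) + i - k) := fun k hk => by
    rw [weylRatio_of_sub_eq (c := 2) (by simp [hookWeight, show k < i by simpa using hk]; omega)]
    push_cast
    ring_nf
  have hone : ∀ s ∈ range m, weylRatio (hookWeight i m) (i + m + t) (i + s)
      = ((t : ℚ) + m - s + 1) / (t + m - s) := fun s hs => by
    rw [weylRatio_of_sub_eq (c := 1) (by simp [hookWeight, show s < m by simpa using hs]; omega)]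
    push_cast
    ring_nf
  rw [prod_range_add, prod_range_add, hzero, mul_one, prod_congr rfl htwo, prod_congr rfl hone,
    prod_range_add_sub_add_two_div, prod_range_add_sub_add_one_div]
  have : (m : ℚ) + t + 1 ≠ 0 := by positivity
  push_cast
  field_simp
  ring

end HookWeight

theorem prod_range_hook_bottom (i m : ℕ) :
    ∏ t ∈ range i, ((i + m + t + 1) * (i + m + t + 2) : ℚ) / ((t + 1) * (m + t + 2)) =
      (i + m + i).choose i * (i + m + i + 1).choose i / (i + m + 1).choose i := by
  have hsplit : ∀ t ∈ range i, ((i + m + t + 1) * (i + m + t + 2) : ℚ) / ((t + 1) * (m + t + 2)) =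
      (((i + m : ℕ) : ℚ) + t + 1) / (t + 1) * ((((i + m + 1 : ℕ) : ℚ) + t + 1) / (t + 1)) /
        ((((m + 1 : ℕ) : ℚ) + t + 1) / (t + 1)) := fun t _ => by
    push_cast
    field_simp
    ring
  rw [prod_congr rfl hsplit, prod_div_distrib, prod_mul_distrib, prod_range_add_succ_div_succ,
    prod_range_add_succ_div_succ, prod_range_add_succ_div_succ, add_right_comm (i + m) 1 i,
    add_comm (m + 1) i, ← add_assoc]

theorem hook_choose_identity (i m : ℕ) :
    (i + m).choose m * (i + m + i).choose i * (i + m + i + 1) =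
      (m + 1) * (i + m + i + 1).choose i * (i + m + 1).choose i := by
  have h1 := Nat.choose_mul_succ_eq (i + m + i) i
  have h2 := Nat.add_one_mul_choose_eq (i + m) m
  have h3 : (i + m + 1).choose (m + 1) = (i + m + 1).choose i := Nat.choose_symm_of_eq_add (by omega)
  rw [show i + m + i + 1 - i = i + m + 1 by omega] at h1
  calc (i + m).choose m * (i + m + i).choose i * (i + m + i + 1)
      = (i + m).choose m * ((i + m + i).choose i * (i + m + i + 1)) := by ring
    _ = (i + m + i + 1).choose i * ((i + m + 1) * (i + m).choose m) := by rw [h1]; ring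
    _ = _ := by rw [h2, h3]; ring

theorem weyl_dim_one_hook_general (n i : ℕ) (hi : 2 * i ≤ n) :
    let lam : ℕ → ℤ := fun k => if k < i then 1 else if k < n - i then 0 else -1
    (∏ j ∈ Finset.range n, ∏ k ∈ Finset.range j,
        (((lam k - lam j : ℤ) : ℚ) + (j : ℚ) - (k : ℚ)) / ((j : ℚ) - (k : ℚ)))
      = (((n : ℚ) - 2 * i + 1) / ((n : ℚ) + 1)) * ((n + 1).choose i : ℚ) ^ 2 := by
  intro lam
  obtain ⟨m, rfl⟩ : ∃ m, n = i + m + i := ⟨n - 2 * i, by omega⟩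
  have hlam : lam = hookWeight i m := by
    funext k
    simp only [lam, hookWeight, show i + m + i - i = i + m by omega]
  change ∏ j ∈ range (i + m + i), ∏ k ∈ range j, weylRatio lam j k = _
  rw [hlam, prod_range_add, prod_range_add,
    prod_eq_one fun j hj => prod_weylRatio_hookWeight_top i m j (mem_range.mp hj), one_mul,
    prod_congr rfl fun t ht => prod_weylRatio_hookWeight_middle i m t (mem_range.mp ht),
    prod_range_add_succ_div_succ,
    prod_congr rfl fun t _ => prod_weylRatio_hookWeight_bottom i m t, prod_range_hook_bottom]
  have key : ((i + m).choose m * (i + m + i).choose i * (i + m + i + 1) : ℚ) =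
      (m + 1) * (i + m + i + 1).choose i * (i + m + 1).choose i := by
    exact_mod_cast hook_choose_identity i m
  have : ((i + m + 1).choose i : ℚ) ≠ 0 := by exact_mod_cast (Nat.choose_pos (by omega)).ne'
  push_cast
  field_simp
  linear_combination ((i + m + i + 1).choose i : ℚ) * key

theorem weyl_dim_one_hook (n i : ℕ) (hn : 1 ≤ n) (hi : 2 * i ≤ n) :
    let lam : ℕ → ℤ := fun k => if k < i then 1 else if k < n - i then 0 else -1
    (∏ j ∈ Finset.range n, ∏ k ∈ Finset.range j,
        (((lam k - lam j : ℤ) : ℚ) + (j : ℚ) - (k : ℚ)) / ((j : ℚ) - (k : ℚ)))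
      = (((n : ℚ) - 2 * i + 1) / ((n : ℚ) + 1)) * ((n + 1).choose i : ℚ) ^ 2 :=
  weyl_dim_one_hook_general n i hi
end

section
/- For integers n ≥ 2 and i ≥ 0, the Weyl dimension formula for U(n) applied to the highest weight (i, 0, …, 0, −i) gives ∏_{1≤k<j≤n} (λ_k − λ_j + j − k)/(j − k) = ((n+2i−1)/(n−1)) · C(n+i−2, i)², where λ = (i, 0^{n−2}, −i). -/
/-!
Only the first and last entries of `λ = (i, 0, …, 0, -i)` are nonzero. In a middle row `j` of the
Weyl product every factor is `1` except the one at `k = 0`, which is `(i + j) / j`; so the middle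
rows contribute `∏_{j < n-1} (i + j) / j = C(n + i - 2, i)`. In the last row the factor at `k = 0` is
`(2i + n - 1) / (n - 1)`, and the others, read backwards from `k = n - 2`, are again
`(i + 1)/1, (i + 2)/2, …`, contributing a second `C(n + i - 2, i)`.
-/

open Finset

theorem prod_range_add_one_div_eq_choose (i m : ℕ) :
    ∏ d ∈ range m, (((i : ℚ) + d + 1) / ((d : ℚ) + 1)) = ((i + m).choose i : ℚ) := by
  induction m with
  | zero => simp
  | succ m ih =>
    have step : ((i + m).choose i : ℚ) * (i + m + 1) = (i + (m + 1)).choose i * (m + 1) := by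
      have h := Nat.choose_mul_succ_eq (i + m) i
      rw [show i + m + 1 - i = m + 1 by omega] at h
      exact_mod_cast h
    rw [prod_range_succ, ih, ← add_assoc]
    field_simp
    linear_combination step

-- The factor at `k = j - d` on the left is the factor at `d` on the right.
theorem prod_weyl_row_of_const (lam : ℕ → ℤ) (j : ℕ) (b : ℤ)
    (hb : ∀ k, 0 < k → k < j + 1 → lam k = b) :
    ∏ k ∈ range (j + 1),
        (((lam k - lam (j + 1) : ℤ) : ℚ) + ((j + 1 : ℕ) : ℚ) - (k : ℚ)) / (((j + 1 : ℕ) : ℚ) - (k : ℚ))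
      = ((((lam 0 - lam (j + 1) : ℤ) : ℚ) + j + 1) / ((j : ℚ) + 1)) *
          ∏ d ∈ range j, ((((b - lam (j + 1) : ℤ) : ℚ) + d + 1) / ((d : ℚ) + 1)) := by
  rw [prod_range_succ', mul_comm, ← prod_range_reflect _ j]
  congr 1
  · push_cast
    ring
  · refine prod_congr rfl fun k hk => ?_
    rw [mem_range] at hk
    rw [show j - 1 - k + 1 = j - k by omega, hb (j - k) (by omega) (by omega),
      Nat.cast_sub hk.le]
    push_cast
    ring_nf

theorem weyl_dim_i_zero_negi (n i : ℕ) (hn : 2 ≤ n) :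
    let lam : ℕ → ℤ := fun k => if k = 0 then (i : ℤ) else if k = n - 1 then -(i : ℤ) else 0
    (∏ j ∈ Finset.range n, ∏ k ∈ Finset.range j,
        (((lam k - lam j : ℤ) : ℚ) + (j : ℚ) - (k : ℚ)) / ((j : ℚ) - (k : ℚ)))
      = (((n : ℚ) + 2 * i - 1) / ((n : ℚ) - 1)) * ((n + i - 2).choose i : ℚ) ^ 2 := by
  intro lam
  obtain ⟨m, rfl⟩ : ∃ m, n = m + 2 := ⟨n - 2, by omega⟩
  have hlam_zero : lam 0 = i := rfl
  have hlam_top : lam (m + 1) = -i := by simp [lam]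
  have hlam_mid : ∀ k, 0 < k → k < m + 1 → lam k = 0 := fun k h0 h1 => by
    simp only [lam, if_neg h0.ne', if_neg (show k ≠ m + 2 - 1 by omega)]
  have middle_row : ∀ j ∈ range m, ∏ k ∈ range (j + 1),
      (((lam k - lam (j + 1) : ℤ) : ℚ) + ((j + 1 : ℕ) : ℚ) - (k : ℚ)) / (((j + 1 : ℕ) : ℚ) - (k : ℚ))
        = ((i : ℚ) + j + 1) / ((j : ℚ) + 1) := fun j hj => by
    rw [mem_range] at hj
    rw [prod_weyl_row_of_const lam j 0 fun k h0 h1 => hlam_mid k h0 (by omega),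
      hlam_mid (j + 1) (by omega) (by omega), sub_self,
      prod_eq_one fun d _ => by rw [Int.cast_zero, zero_add, div_self (by positivity)],
      mul_one, hlam_zero, sub_zero, Int.cast_natCast]
  rw [prod_range_succ, prod_range_succ', prod_congr rfl middle_row,
    prod_weyl_row_of_const lam m 0 hlam_mid, prod_range_zero, mul_one, hlam_zero, hlam_top,
    zero_sub, neg_neg, Int.cast_natCast, prod_range_add_one_div_eq_choose,
    show m + 2 + i - 2 = i + m by omega]
  push_cast
  rw [show (m : ℚ) + 2 - 1 = m + 1 by ring]
  ring
end

section
/- For integers n and 2 ≤ i with 2i ≤ n, the Weyl dimension formula for U(n) applied to λ = (2, 1^{i−1}, 0^{n−2i}, (−1)^{i−1}, −2) yields ∏_{1≤k<j≤n}(λ_k − λ_j + j − k)/(j − k) = i²(n+3)(n−2i+1)/(n−i+2)² · C(n+1, i+1)². -/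
/-!
Split `0, …, n-1` into the five blocks on which `λ` is constant, of sizes `1, i-1, n-2i, i-1, 1`.
Pairs inside a block contribute `1`. Take a block of `sz` entries followed, after a gap of `e`, by
a block of `t` entries smaller by `d`. For fixed `j` in the second block, the product of
`(d + j - k)/(j - k)` over the first block is `(a+sz+d)! a! / ((a+sz)! (a+d)!)`, where `a + 1` is
the distance from `j` to the first block. This is symmetric in `sz` and `d`; trading `sz` for `d`
and swapping the two products gives `∏_{u<d} (e+u+t+sz)! (e+u)! / ((e+u+t)! (e+u+sz)!)`. Since
`d ≤ 4` here, the ten block pairs give an explicit ratio of factorials, which simplifies to the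
claimed value.
-/

open Finset
open scoped Nat

def weylFactor (lam : ℕ → ℤ) (j k : ℕ) : ℚ :=
  (((lam k - lam j : ℤ) : ℚ) + (j : ℚ) - (k : ℚ)) / ((j : ℚ) - (k : ℚ))

def weylProd (lam : ℕ → ℤ) (n : ℕ) : ℚ :=
  ∏ j ∈ range n, ∏ k ∈ range j, weylFactor lam j k

def factorialRatio (a p q : ℕ) : ℚ := ((a + p + q)! * a ! : ℚ) / ((a + p)! * (a + q)!)

theorem factorialRatio_comm (a p q : ℕ) : factorialRatio a p q = factorialRatio a q p := by
  rw [factorialRatio, factorialRatio, add_right_comm, mul_comm ((a + p)! : ℚ)]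

theorem factorialRatio_one_right (a p : ℕ) :
    factorialRatio a p 1 = ((a + p + 1 : ℕ) : ℚ) / (a + 1 : ℕ) := by
  rw [factorialRatio, Nat.factorial_succ, Nat.factorial_succ]
  have := Nat.factorial_ne_zero (a + p)
  have := Nat.factorial_ne_zero a
  push_cast
  field_simp

theorem factorialRatio_one_left (a q : ℕ) :
    factorialRatio a 1 q = ((a + q + 1 : ℕ) : ℚ) / (a + 1 : ℕ) := by
  rw [factorialRatio_comm, factorialRatio_one_right]

theorem prod_range_div_eq_factorialRatio (a p q : ℕ) :
    ∏ x ∈ range p, ((a + x + 1 + q : ℕ) : ℚ) / (a + x + 1 : ℕ) = factorialRatio a p q := by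
  induction p with
  | zero =>
    rw [factorialRatio, add_zero, mul_comm, div_self (by positivity), prod_range_zero]
  | succ p ih =>
    rw [prod_range_succ, ih, factorialRatio, factorialRatio, ← add_assoc,
      show a + p + 1 + q = a + p + q + 1 by ring, Nat.factorial_succ (a + p + q),
      Nat.factorial_succ (a + p)]
    have := Nat.factorial_ne_zero (a + p)
    have := Nat.factorial_ne_zero (a + q)
    push_cast
    field_simp

theorem prod_prod_div_eq_prod_factorialRatio (e t sz d : ℕ) :
    ∏ b ∈ range t, ∏ x ∈ range sz, ((e + b + x + 1 + d : ℕ) : ℚ) / (e + b + x + 1 : ℕ)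
      = ∏ u ∈ range d, factorialRatio (e + u) t sz :=
  calc _ = ∏ b ∈ range t, ∏ u ∈ range d, ((e + b + u + 1 + sz : ℕ) : ℚ) / (e + b + u + 1 : ℕ) := by
          refine prod_congr rfl fun b _ => ?_
          rw [prod_range_div_eq_factorialRatio, factorialRatio_comm,
            ← prod_range_div_eq_factorialRatio]
    _ = _ := by
          rw [prod_comm]
          refine prod_congr rfl fun u _ => ?_
          rw [← prod_range_div_eq_factorialRatio]
          refine prod_congr rfl fun b _ => ?_
          ring_nf

def blockPairFactor (e t sz d : ℕ) : ℚ := ∏ u ∈ range d, factorialRatio (e + u) t sz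

theorem weylFactor_of_eq (lam : ℕ → ℤ) {j k : ℕ} (hkj : k < j) (h : lam k = lam j) :
    weylFactor lam j k = 1 := by
  have : (j : ℚ) - k ≠ 0 := sub_ne_zero.mpr (by exact_mod_cast hkj.ne')
  rw [weylFactor, h, sub_self, Int.cast_zero, zero_add, div_self this]

theorem prod_Ico_prod_Ico_weylFactor (lam : ℕ → ℤ) (P sz e t d : ℕ)
    (hd : ∀ k ∈ Ico P (P + sz), ∀ j ∈ Ico (P + sz + e) (P + sz + e + t), lam k - lam j = d) :
    ∏ j ∈ Ico (P + sz + e) (P + sz + e + t), ∏ k ∈ Ico P (P + sz), weylFactor lam j k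
      = blockPairFactor e t sz d := by
  rw [blockPairFactor, ← prod_prod_div_eq_prod_factorialRatio, prod_Ico_eq_prod_range,
    Nat.add_sub_cancel_left]
  refine prod_congr rfl fun b hb => ?_
  rw [prod_Ico_eq_prod_range, Nat.add_sub_cancel_left, ← prod_range_reflect]
  refine prod_congr rfl fun x hx => ?_
  obtain ⟨c, rfl⟩ : ∃ c, sz = x + c + 1 := ⟨sz - x - 1, by simp only [mem_range] at hx; omega⟩
  rw [weylFactor, hd _ (mem_Ico.2 ⟨by omega, by omega⟩) _
    (mem_Ico.2 ⟨by omega, by simp only [mem_range] at hb; omega⟩),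
    show x + c + 1 - 1 - x = c by omega]
  push_cast
  ring_nf

theorem weylProd_eq_mul_of_const (lam : ℕ → ℤ) {N M : ℕ} (hNM : N ≤ M) (a : ℤ)
    (hconst : ∀ k ∈ Ico N M, lam k = a) :
    weylProd lam M = weylProd lam N * ∏ j ∈ Ico N M, ∏ k ∈ range N, weylFactor lam j k := by
  rw [weylProd, weylProd, ← prod_range_mul_prod_Ico _ hNM]
  congr 1
  refine prod_congr rfl fun j hj => ?_
  have hjM := mem_Ico.1 hj
  rw [← prod_range_mul_prod_Ico _ hjM.1, prod_eq_one (s := Ico N j) fun k hk => ?_, mul_one]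
  have hk := mem_Ico.1 hk
  exact weylFactor_of_eq lam hk.2 <| by
    rw [hconst k (mem_Ico.2 ⟨hk.1, hk.2.trans hjM.2⟩), hconst j hj]

theorem prod_range_sum_eq_prod_prod_Ico {M : Type*} [CommMonoid M] (f : ℕ → M) (c : ℕ → ℕ)
    (r : ℕ) : ∏ k ∈ range (∑ x ∈ range r, c x), f k
      = ∏ p ∈ range r, ∏ k ∈ Ico (∑ x ∈ range p, c x) (∑ x ∈ range (p + 1), c x), f k := by
  induction r with
  | zero => simp
  | succ r ih =>
    rw [prod_range_succ, ← ih, prod_range_mul_prod_Ico _ (sum_range_succ c r ▸ le_self_add)]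

theorem weylProd_eq_prod_blockPairFactor (lam : ℕ → ℤ) (c : ℕ → ℕ) {v : ℕ → ℤ}
    (hv : Antitone v) (r : ℕ)
    (hlam : ∀ p < r, ∀ k ∈ Ico (∑ x ∈ range p, c x) (∑ x ∈ range (p + 1), c x), lam k = v p) :
    weylProd lam (∑ x ∈ range r, c x) = ∏ q ∈ range r, ∏ p ∈ range q,
      blockPairFactor (∑ x ∈ Ico (p + 1) q, c x) (c q) (c p) (v p - v q).toNat := by
  induction r with
  | zero => simp [weylProd]
  | succ r ih =>
    rw [weylProd_eq_mul_of_const lam (sum_range_succ c r ▸ le_self_add) _ (hlam r r.lt_succ_self),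
      ih fun p hp => hlam p (hp.trans r.lt_succ_self), prod_range_succ]
    congr 1
    simp_rw [prod_range_sum_eq_prod_prod_Ico _ c r]
    rw [prod_comm]
    refine prod_congr rfl fun p hp => ?_
    have hp := mem_range.1 hp
    rw [sum_range_succ c r, ← sum_range_add_sum_Ico c hp, sum_range_succ c p]
    refine prod_Ico_prod_Ico_weylFactor lam _ _ _ _ _ fun k hk j hj => ?_
    rw [hlam p (hp.trans r.lt_succ_self) k (by rwa [sum_range_succ c p]),
      hlam r r.lt_succ_self j
        (by rwa [sum_range_succ c r, ← sum_range_add_sum_Ico c hp, sum_range_succ c p]),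
      Int.toNat_of_nonneg (sub_nonneg.2 (hv hp.le))]

-- The blocks of `λ = (2, 1^(i-1), 0^(n-2i), (-1)^(i-1), -2)`, with `i = s + 2` and `m = n - 2i`.
def hookBlockSizes (s m : ℕ) (p : ℕ) : ℕ := [1, s + 1, m, s + 1, 1].getD p 0

def hookBlockValues (p : ℕ) : ℤ := [2, 1, 0, -1].getD p (-2)

theorem hookBlockValues_antitone : Antitone hookBlockValues := by
  refine antitone_nat_of_succ_le fun p => ?_
  rcases p with _ | _ | _ | _ | p <;> simp [hookBlockValues]

theorem prod_blockPairFactor_hookBlocks (s m : ℕ) :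
    ∏ q ∈ range 5, ∏ p ∈ range q, blockPairFactor (∑ x ∈ Ico (p + 1) q, hookBlockSizes s m x)
      (hookBlockSizes s m q) (hookBlockSizes s m p) (hookBlockValues p - hookBlockValues q).toNat
      = (s + 2) ^ 2 * (m + 2 * s + 7) * (m + 1) / (m + s + 4) ^ 2
        * ((m + 2 * s + 5).choose (s + 3) : ℚ) ^ 2 := by
  simp only [prod_range_succ, prod_range_zero, sum_Ico_eq_sum_range, sum_range_succ, sum_range_zero,
    hookBlockSizes, hookBlockValues, List.getD_cons_succ, List.getD_cons_zero, List.getD_nil,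
    blockPairFactor, one_mul, zero_add, factorialRatio_one_right, factorialRatio_one_left,
    add_zero, Nat.reduceAdd, Nat.reduceSub, Int.reduceSub, Int.reduceNeg, Int.reduceToNat]
  simp only [factorialRatio]
  rw [Nat.cast_choose ℚ (by omega : s + 3 ≤ m + 2 * s + 5),
    show m + 2 * s + 5 - (s + 3) = m + s + 2 by omega, show m + 2 * s + 5 = m + s + s + 5 by ring]
  simp only [Nat.factorial_succ, Nat.add_succ, Nat.succ_add, Nat.factorial_zero, zero_add,
    add_zero, add_comm s m]
  have := Nat.factorial_ne_zero (m + s)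
  have := Nat.factorial_ne_zero (m + s + s)
  have := Nat.factorial_ne_zero m
  have := Nat.factorial_ne_zero s
  push_cast
  field_simp
  ring

theorem weyl_dim_two_one_hook (n i : ℕ) (hi : 2 ≤ i) (hin : 2 * i ≤ n) :
    let lam : ℕ → ℤ := fun k =>
      if k = 0 then 2 else if k < i then 1 else if k < n - i then 0
      else if k < n - 1 then -1 else -2
    (∏ j ∈ Finset.range n, ∏ k ∈ Finset.range j,
        (((lam k - lam j : ℤ) : ℚ) + (j : ℚ) - (k : ℚ)) / ((j : ℚ) - (k : ℚ)))
      = ((i : ℚ) ^ 2 * ((n : ℚ) + 3) * ((n : ℚ) - 2 * i + 1) / (((n : ℚ) - i + 2) ^ 2))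
        * ((n + 1).choose (i + 1) : ℚ) ^ 2 := by
  intro lam
  obtain ⟨s, rfl⟩ : ∃ s, i = s + 2 := ⟨i - 2, by omega⟩
  obtain ⟨m, rfl⟩ : ∃ m, n = 2 * s + 4 + m := ⟨n - (2 * s + 4), by omega⟩
  have hblocks : ∀ p < 5, ∀ k ∈ Ico (∑ x ∈ range p, hookBlockSizes s m x)
      (∑ x ∈ range (p + 1), hookBlockSizes s m x), lam k = hookBlockValues p := by
    intro p hp k hk
    rw [mem_Ico] at hk
    interval_cases p <;>
      simp only [hookBlockSizes, hookBlockValues, lam, sum_range_succ, sum_range_zero,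
        List.getD_cons_succ, List.getD_cons_zero, List.getD_nil] at hk ⊢ <;>
      split_ifs <;> omega
  have hn : 2 * s + 4 + m = ∑ x ∈ range 5, hookBlockSizes s m x := by
    simp only [hookBlockSizes, sum_range_succ, sum_range_zero, List.getD_cons_succ,
      List.getD_cons_zero]
    ring
  change weylProd lam _ = _
  conv_lhs => rw [hn, weylProd_eq_prod_blockPairFactor lam _ hookBlockValues_antitone 5 hblocks]
  rw [prod_blockPairFactor_hookBlocks]
  push_cast
  ring_nf
end

section
/- Let f : [0,1]^m → ℝ be f(y) = ∏_{i=1}^m y_i, and suppose X is a nonempty finite set with a symmetric kernel y : X × X → [0,1]^m such that y(a,a) = (1,…,1) for all a. Suppose f can be written as f = c_0 + ∑_{μ ∈ T} c_μ Z_μ where c_0 > 0, each c_μ > 0, each kernel (a,b) ↦ Z_μ(y(a,b)) is positive semidefinite on X, and ∑_{a,b ∈ X} Z_μ(y(a,b)) = 0 for each μ ∈ T. Then |X| ≥ f(1,…,1)/c_0 (linear programming bound for designs). -/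
/-!
Sum the identity `f = c₀ + ∑ c_μ Z_μ` over all pairs of `X`. The design condition kills every
`Z_μ`, so the double sum of `f (y a b)` is exactly `|X|² c₀`. On the other hand `f ≥ 0` and the
diagonal terms are `f (1, …, 1) = 1`, so the double sum is at least `|X|`. Hence `|X| ≤ |X|² c₀`.
-/

open Finset

section DoubleSum

variable {α ι : Type*} {X : Finset α} {K : α → α → ℝ}

theorem sum_sum_eq_card_sq_mul_of_design {T : Finset ι} {Z : ι → α → α → ℝ} {c₀ : ℝ}
    {c : ι → ℝ} (hK : ∀ a ∈ X, ∀ b ∈ X, K a b = c₀ + ∑ μ ∈ T, c μ * Z μ a b)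
    (hZ : ∀ μ ∈ T, ∑ a ∈ X, ∑ b ∈ X, Z μ a b = 0) :
    ∑ a ∈ X, ∑ b ∈ X, K a b = (#X : ℝ) ^ 2 * c₀ := by
  calc ∑ a ∈ X, ∑ b ∈ X, K a b
      = ∑ a ∈ X, ∑ b ∈ X, (c₀ + ∑ μ ∈ T, c μ * Z μ a b) :=
        sum_congr rfl fun a ha => sum_congr rfl fun b hb => hK a ha b hb
    _ = (#X : ℝ) ^ 2 * c₀ + ∑ μ ∈ T, c μ * ∑ a ∈ X, ∑ b ∈ X, Z μ a b := by
        simp only [sum_add_distrib, sum_const, nsmul_eq_mul, mul_sum]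
        simp only [sum_comm (s := X) (t := T)]
        ring
    _ = (#X : ℝ) ^ 2 * c₀ := by
        rw [sum_eq_zero fun μ hμ => by rw [hZ μ hμ, mul_zero], add_zero]

theorem card_le_sum_sum_of_nonneg (hK : ∀ a ∈ X, ∀ b ∈ X, 0 ≤ K a b)
    (hdiag : ∀ a ∈ X, 1 ≤ K a a) :
    (#X : ℝ) ≤ ∑ a ∈ X, ∑ b ∈ X, K a b := by
  rw [← Nat.smul_one_eq_cast, ← sum_const]
  exact sum_le_sum fun a ha =>
    (hdiag a ha).trans (single_le_sum (hK a ha) ha)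

end DoubleSum

theorem one_div_le_of_le_sq_mul {N c : ℝ} (hN : 0 < N) (h : N ≤ N ^ 2 * c) : 1 / c ≤ N := by
  have hNc : 1 ≤ N * c := by nlinarith
  have hc : 0 < c := pos_of_mul_pos_right (one_pos.trans_le hNc) hN.le
  rw [div_le_iff₀ hc]
  linarith

theorem linear_programming_bound_general {α ι : Type*} (m : ℕ)
    (X : Finset α) (hX : X.Nonempty)
    (y : α → α → Fin m → ℝ)
    (hrange : ∀ a b, ∀ i, 0 ≤ y a b i ∧ y a b i ≤ 1)
    (hdiag : ∀ a ∈ X, y a a = fun _ => 1)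
    (T : Finset ι) (Z : ι → (Fin m → ℝ) → ℝ) (c₀ : ℝ) (c : ι → ℝ)
    (hF : ∀ v : Fin m → ℝ, (∀ i, 0 ≤ v i ∧ v i ≤ 1) →
      (∏ i, v i) = c₀ + ∑ μ ∈ T, c μ * Z μ v)
    (hdesign : ∀ μ ∈ T, ∑ a ∈ X, ∑ b ∈ X, Z μ (y a b) = 0) :
    (∏ _i : Fin m, (1 : ℝ)) / c₀ ≤ (X.card : ℝ) := by
  have hsum : ∑ a ∈ X, ∑ b ∈ X, ∏ i, y a b i = (#X : ℝ) ^ 2 * c₀ :=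
    sum_sum_eq_card_sq_mul_of_design (Z := fun μ a b => Z μ (y a b))
      (fun a _ b _ => hF _ (hrange a b)) hdesign
  have hlow : (#X : ℝ) ≤ ∑ a ∈ X, ∑ b ∈ X, ∏ i, y a b i :=
    card_le_sum_sum_of_nonneg
      (fun a _ b _ => prod_nonneg fun i _ => (hrange a b i).1)
      (fun a ha => by simp [hdiag a ha])
  rw [prod_const_one]
  exact one_div_le_of_le_sq_mul (by exact_mod_cast hX.card_pos) (hsum ▸ hlow)

theorem linear_programming_bound {α ι : Type*} (m : ℕ)
    (X : Finset α) (hX : X.Nonempty)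
    (y : α → α → Fin m → ℝ)
    (hrange : ∀ a b, ∀ i, 0 ≤ y a b i ∧ y a b i ≤ 1)
    (hsymm : ∀ a b, y a b = y b a)
    (hdiag : ∀ a ∈ X, y a a = fun _ => 1)
    (T : Finset ι) (Z : ι → (Fin m → ℝ) → ℝ) (c₀ : ℝ) (c : ι → ℝ)
    (hc₀ : 0 < c₀) (hc : ∀ μ ∈ T, 0 < c μ)
    (hF : ∀ v : Fin m → ℝ, (∀ i, 0 ≤ v i ∧ v i ≤ 1) →
      (∏ i, v i) = c₀ + ∑ μ ∈ T, c μ * Z μ v)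
    (hpsd : ∀ μ ∈ T, ∀ w : α → ℝ,
      0 ≤ ∑ a ∈ X, ∑ b ∈ X, w a * w b * Z μ (y a b))
    (hdesign : ∀ μ ∈ T, ∑ a ∈ X, ∑ b ∈ X, Z μ (y a b) = 0) :
    (∏ _i : Fin m, (1 : ℝ)) / c₀ ≤ (X.card : ℝ) :=
  linear_programming_bound_general m X hX y hrange hdiag T Z c₀ c hF hdesign
end
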